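/- For every even integer n ≥ 2, the limit as w → 1 of the expression w^3 + w - 1 + Σ_{i=2}^{n/2} (w-1)(w^2-1)/(w^{i+1}-1) + (w-1)w^2/(w^{n+3}-1) + (w-1)(w^2-1)·[ Σ_{i=1}^{n/2 - 1} 1/((w^{i+1}-1)(w^{i+2}-1)) + 1/((w^{n/2+1}-1)(w^{n+3}-1)) ] equals 2 - 3/(n+3). -/

import Mathlib

/-!
Writing `q_k(w) = (w - 1) / (w ^ k - 1)`, every term of the expression is a continuous function
of `w` times a product of at most two of the `q_k`, and `q_k(w) → 1 / k` because `1 / q_k` is a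
difference quotient of `w ^ k` at `1`. Passing to the limit term by term gives, for `n = 2m`,
`1 + 1 / (n + 3) + ∑_{i=1}^{m-1} 2 / ((i + 1) (i + 2)) + 2 / ((m + 1) (n + 3))`,
and the sum telescopes to `1 - 2 / (m + 1)`.
-/

open Filter Topology

section Limits

variable {𝕜 : Type*} [NontriviallyNormedField 𝕜] [CharZero 𝕜]

theorem tendsto_sub_one_div_pow_sub_one {k : ℕ} (hk : k ≠ 0) :
    Tendsto (fun w : 𝕜 => (w - 1) / (w ^ k - 1)) (𝓝[≠] 1) (𝓝 (k : 𝕜)⁻¹) := by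
  have hslope := (hasDerivAt_pow k (1 : 𝕜)).tendsto_slope.inv₀ (by simpa using hk)
  simp only [one_pow, mul_one] at hslope
  refine hslope.congr fun w => ?_
  rw [slope_def_field, inv_div, one_pow]

theorem tendsto_sub_one_mul_sq_sub_one_div_pow_sub_one {k : ℕ} (hk : k ≠ 0) :
    Tendsto (fun w : 𝕜 => (w - 1) * (w ^ 2 - 1) / (w ^ k - 1)) (𝓝[≠] 1) (𝓝 0) := by
  have hsq : Tendsto (fun w : 𝕜 => w ^ 2 - 1) (𝓝[≠] 1) (𝓝 0) :=
    (((continuous_pow 2).sub continuous_const).tendsto' 1 0 (by norm_num)).mono_left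
      nhdsWithin_le_nhds
  simpa using (hsq.mul (tendsto_sub_one_div_pow_sub_one hk)).congr fun w => by ring

theorem tendsto_sub_one_mul_sq_div_pow_sub_one {k : ℕ} (hk : k ≠ 0) :
    Tendsto (fun w : 𝕜 => (w - 1) * w ^ 2 / (w ^ k - 1)) (𝓝[≠] 1) (𝓝 (k : 𝕜)⁻¹) := by
  have hsq : Tendsto (fun w : 𝕜 => w ^ 2) (𝓝[≠] 1) (𝓝 1) :=
    ((continuous_pow 2).tendsto' 1 1 (one_pow 2)).mono_left nhdsWithin_le_nhds
  simpa using (hsq.mul (tendsto_sub_one_div_pow_sub_one hk)).congr fun w => by ring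

theorem tendsto_sub_one_mul_sq_sub_one_mul_one_div {a b : ℕ} (ha : a ≠ 0) (hb : b ≠ 0) :
    Tendsto (fun w : 𝕜 => (w - 1) * (w ^ 2 - 1) * (1 / ((w ^ a - 1) * (w ^ b - 1))))
      (𝓝[≠] 1) (𝓝 (2 / ((a : 𝕜) * b))) := by
  have hsucc : Tendsto (fun w : 𝕜 => w + 1) (𝓝[≠] 1) (𝓝 2) :=
    ((continuous_add_const 1).tendsto' 1 2 one_add_one_eq_two).mono_left nhdsWithin_le_nhds
  have hprod := (tendsto_sub_one_div_pow_sub_one ha).mul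
    (hsucc.mul (tendsto_sub_one_div_pow_sub_one hb))
  rw [show (a : 𝕜)⁻¹ * (2 * (b : 𝕜)⁻¹) = 2 / (a * b) by ring] at hprod
  exact hprod.congr fun w => by rw [one_div, mul_inv]; ring

end Limits

theorem sum_Icc_two_div_succ_mul_succ_succ {K : Type*} [Field K] [CharZero K] (m : ℕ) :
    ∑ i ∈ Finset.Icc 1 m, (2 : K) / ((i + 1) * (i + 2)) = 1 - 2 / (m + 2) := by
  induction m with
  | zero => norm_num
  | succ m ih =>
    rw [Finset.sum_Icc_succ_top (by omega), ih]
    push_cast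
    rw [add_assoc (m : K) 1 1, one_add_one_eq_two]
    have h2 : (m : K) + 2 ≠ 0 := by norm_cast
    have h3 : (m : K) + 1 + 2 ≠ 0 := by norm_cast
    field_simp
    ring

theorem estr_An_even (n : ℕ) (hn : 2 ≤ n) (hev : Even n) :
    Tendsto (fun w : ℝ =>
      w ^ 3 + w - 1
        + ∑ i ∈ Finset.Icc 2 (n / 2), ((w - 1) * (w ^ 2 - 1)) / (w ^ (i + 1) - 1)
        + ((w - 1) * w ^ 2) / (w ^ (n + 3) - 1)
        + (w - 1) * (w ^ 2 - 1) *
            ((∑ i ∈ Finset.Icc 1 (n / 2 - 1),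
                1 / ((w ^ (i + 1) - 1) * (w ^ (i + 2) - 1)))
              + 1 / ((w ^ (n / 2 + 1) - 1) * (w ^ (n + 3) - 1))))
      (𝓝[≠] 1) (𝓝 (2 - 3 / ((n : ℝ) + 3))) := by
  obtain ⟨m, hm⟩ := hev
  obtain ⟨j, rfl⟩ : ∃ j, m = j + 1 := ⟨m - 1, by omega⟩
  have hhalf : n / 2 = j + 1 := by omega
  simp only [hhalf, Nat.add_sub_cancel]
  have hcubic : Tendsto (fun w : ℝ => w ^ 3 + w - 1) (𝓝[≠] 1) (𝓝 1) :=
    (((continuous_pow 3).add continuous_id).sub continuous_const |>.tendsto' 1 1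
      (by norm_num)).mono_left nhdsWithin_le_nhds
  have hcross := (tendsto_finsetSum (Finset.Icc 1 j) fun i _ =>
      tendsto_sub_one_mul_sq_sub_one_mul_one_div (𝕜 := ℝ) i.succ_ne_zero
        (by omega : i + 2 ≠ 0)).add
    (tendsto_sub_one_mul_sq_sub_one_mul_one_div (𝕜 := ℝ) (j + 1).succ_ne_zero
      (by omega : n + 3 ≠ 0))
  simp only [← Finset.mul_sum, ← mul_add] at hcross
  have hlim := ((hcubic.add (tendsto_finsetSum (Finset.Icc 2 (j + 1)) fun i _ =>
      tendsto_sub_one_mul_sq_sub_one_div_pow_sub_one (𝕜 := ℝ) i.succ_ne_zero)).add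
    (tendsto_sub_one_mul_sq_div_pow_sub_one (𝕜 := ℝ) (by omega : n + 3 ≠ 0))).add hcross
  convert hlim using 2
  subst hm
  rw [Finset.sum_const_zero]
  push_cast
  rw [sum_Icc_two_div_succ_mul_succ_succ]
  field_simp
  ring
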